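/- An even nonnegative integer n satisfies v(n) = 3 if and only if n ∈ {20, 26, 34, 46, 48, 60}. -/

import Mathlib

/-- The value of a word over the digits `{0,1,2}`, read as a (hyper)binary expansion:
`wordVal (x₀ … x_k) = Σ x_i · 2^(k-i)`. -/
def wordVal : List ℕ → ℕ
  | [] => 0
  | d :: w => d * 2 ^ w.length + wordVal w

/-- `Hyp n` is the set of hyperbinary expansions of `n`: words over `{0,1,2}` with
nonzero leading digit whose value is `n` (the empty word is the unique expansion of `0`). -/
def Hyp (n : ℕ) : Set (List ℕ) :=
  {w | (∀ d ∈ w, d ≤ 2) ∧ w.head? ≠ some 0 ∧ wordVal w = n}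

lemma wordVal_snoc (u : List ℕ) (d : ℕ) : wordVal (u ++ [d]) = 2 * wordVal u + d := by
  induction u with
  | nil => simp [wordVal]
  | cons a t ih => simp [wordVal, ih, List.length_append]; ring

lemma head?_snoc_ne (u : List ℕ) (d : ℕ) :
    ((u ++ [d]).head? ≠ some 0) ↔ (u.head? ≠ some 0 ∧ (u = [] → d ≠ 0)) := by
  cases u <;> simp

lemma mem_snoc_le (u : List ℕ) (d : ℕ) :
    (∀ e ∈ u ++ [d], e ≤ 2) ↔ (∀ e ∈ u, e ≤ 2) ∧ d ≤ 2 := by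
  constructor
  · exact fun h => ⟨fun e he => h e (List.mem_append.2 (Or.inl he)), h d (by simp)⟩
  · rintro ⟨h1, h2⟩ e he
    rcases List.mem_append.1 he with h | h
    · exact h1 e h
    · simp at h; omega

lemma hyp_snoc_iff {n : ℕ} {u : List ℕ} {d : ℕ} :
    u ++ [d] ∈ Hyp n ↔
      (∀ e ∈ u, e ≤ 2) ∧ u.head? ≠ some 0 ∧ d ≤ 2 ∧ 2 * wordVal u + d = n ∧ (u = [] → d ≠ 0) := by
  unfold Hyp
  rw [Set.mem_setOf_eq, wordVal_snoc, head?_snoc_ne, mem_snoc_le]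
  tauto

lemma hyp_zero : Hyp 0 = {([] : List ℕ)} := by
  ext w
  constructor
  · rintro ⟨hd, hh, hv⟩
    cases w with
    | nil => rfl
    | cons a t =>
      exfalso
      simp only [wordVal] at hv
      have : a = 0 := by
        have := Nat.pow_pos (n := t.length) (by norm_num : 0 < 2)
        nlinarith
      subst this
      simp at hh
  · rintro rfl
    exact ⟨by simp, by simp, rfl⟩

lemma hyp_odd (n : ℕ) : Hyp (2 * n + 1) = (fun u => u ++ [1]) '' Hyp n := by
  ext w
  constructor
  · intro hw
    rcases w.eq_nil_or_concat' with rfl | ⟨u, d, rfl⟩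
    · exfalso; have := hw.2.2; simp [wordVal] at this
    · rw [hyp_snoc_iff] at hw
      obtain ⟨h1, h2, h3, h4, h5⟩ := hw
      have hd : d = 1 := by omega
      subst hd
      exact ⟨u, ⟨h1, h2, by omega⟩, rfl⟩
  · rintro ⟨u, ⟨h1, h2, h3⟩, rfl⟩
    rw [hyp_snoc_iff]
    exact ⟨h1, h2, by norm_num, by omega, by simp⟩

lemma hyp_even (n : ℕ) (hn : 1 ≤ n) :
    Hyp (2 * n) = (fun u => u ++ [0]) '' Hyp n ∪ (fun u => u ++ [2]) '' Hyp (n - 1) := by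
  ext w
  constructor
  · intro hw
    rcases w.eq_nil_or_concat' with rfl | ⟨u, d, rfl⟩
    · exfalso; have := hw.2.2; simp [wordVal] at this; omega
    · rw [hyp_snoc_iff] at hw
      obtain ⟨h1, h2, h3, h4, h5⟩ := hw
      have hd : d = 0 ∨ d = 2 := by omega
      rcases hd with rfl | rfl
      · exact Or.inl ⟨u, ⟨h1, h2, by omega⟩, rfl⟩
      · exact Or.inr ⟨u, ⟨h1, h2, by omega⟩, rfl⟩
  · rintro (⟨u, ⟨h1, h2, h3⟩, rfl⟩ | ⟨u, ⟨h1, h2, h3⟩, rfl⟩) <;> rw [hyp_snoc_iff]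
    · refine ⟨h1, h2, by norm_num, by omega, ?_⟩
      rintro rfl
      exfalso; simp [wordVal] at h3; omega
    · exact ⟨h1, h2, by norm_num, by omega, fun _ => by norm_num⟩

lemma hyp_length_le {n : ℕ} {w : List ℕ} (hw : w ∈ Hyp n) : w.length ≤ n + 1 := by
  obtain ⟨h1, h2, h3⟩ := hw
  cases w with
  | nil => simp
  | cons a t =>
    simp only [List.head?_cons, ne_eq, Option.some.injEq] at h2
    simp only [wordVal] at h3
    have ha : 1 ≤ a := by omega
    have hp : 2 ^ t.length ≤ n := by nlinarith [Nat.pow_pos (n := t.length) (by norm_num : 0 < 2)]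
    have := Nat.lt_two_pow_self (n := t.length)
    simp only [List.length_cons]
    omega

lemma hyp_finite (n : ℕ) : (Hyp n).Finite := by
  apply Set.Finite.subset ((List.finite_length_le (Fin 3) (n + 1)).image (List.map Fin.val))
  intro w hw
  refine ⟨w.map (fun d => (⟨min d 2, by omega⟩ : Fin 3)), by simpa using hyp_length_le hw, ?_⟩
  rw [List.map_map]
  have : ∀ e ∈ w, (Fin.val ∘ fun d => (⟨min d 2, by omega⟩ : Fin 3)) e = e := by
    intro e he
    have := hw.1 e he
    simp; omega
  rw [List.map_congr_left this]
  exact List.map_id w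

/-- Single-step reduction of type `→` : `(x02y, x10y)` or `(2y, 10y)`. -/
def StepArrow (a b : List ℕ) : Prop :=
  (∃ x y : List ℕ, a = x ++ 0 :: 2 :: y ∧ b = x ++ 1 :: 0 :: y) ∨
    (∃ y : List ℕ, a = 2 :: y ∧ b = 1 :: 0 :: y)

/-- Single-step reduction of type `↠` : `(x12y, x20y)`. -/
def StepDouble (a b : List ℕ) : Prop :=
  ∃ x y : List ℕ, a = x ++ 1 :: 2 :: y ∧ b = x ++ 2 :: 0 :: y

/-- A single-step reduction (of either type). -/
def Step (a b : List ℕ) : Prop := StepArrow a b ∨ StepDouble a b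

lemma snoc_inj {u v : List ℕ} {p q : ℕ} (h : u ++ [p] = v ++ [q]) : u = v ∧ p = q := by
  have := List.append_inj' h rfl
  exact ⟨this.1, by simpa using this.2⟩

lemma snoc_eq_append_cons_cons {u x y : List ℕ} {p c1 c2 : ℕ} :
    u ++ [p] = x ++ c1 :: c2 :: y ↔
      (y = [] ∧ p = c2 ∧ u = x ++ [c1]) ∨ (∃ y', y = y' ++ [p] ∧ u = x ++ c1 :: c2 :: y') := by
  constructor
  · intro h
    rcases y.eq_nil_or_concat' with rfl | ⟨y', d, rfl⟩
    · left
      have h' : u ++ [p] = (x ++ [c1]) ++ [c2] := by simpa using h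
      obtain ⟨h1, h2⟩ := snoc_inj h'
      exact ⟨rfl, h2, h1⟩
    · right
      have h' : u ++ [p] = (x ++ c1 :: c2 :: y') ++ [d] := by simpa using h
      obtain ⟨h1, h2⟩ := snoc_inj h'
      exact ⟨y', by rw [h2], h1⟩
  · rintro (⟨rfl, rfl, rfl⟩ | ⟨y', rfl, rfl⟩) <;> simp

lemma snoc_eq_cons {u y : List ℕ} {p c : ℕ} :
    u ++ [p] = c :: y ↔ (u = [] ∧ y = [] ∧ p = c) ∨ (∃ u', u = c :: u' ∧ y = u' ++ [p]) := by
  cases u with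
  | nil => simp [eq_comm, and_comm]
  | cons a t =>
    simp only [List.cons_append, List.cons.injEq]
    constructor
    · rintro ⟨rfl, rfl⟩
      exact Or.inr ⟨t, ⟨rfl, rfl⟩, rfl⟩
    · rintro (⟨h, -⟩ | ⟨u', ⟨rfl, rfl⟩, rfl⟩)
      · simp at h
      · exact ⟨rfl, rfl⟩

lemma stepArrow_snoc {u v : List ℕ} {p q : ℕ} :
    StepArrow (u ++ [p]) (v ++ [q]) ↔
      (p = q ∧ StepArrow u v) ∨
        (p = 2 ∧ q = 0 ∧ ((∃ x, u = x ++ [0] ∧ v = x ++ [1]) ∨ (u = [] ∧ v = [1]))) := by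
  constructor
  · rintro (⟨x, y, ha, hb⟩ | ⟨y, ha, hb⟩)
    · rw [snoc_eq_append_cons_cons] at ha
      rcases ha with ⟨rfl, rfl, rfl⟩ | ⟨y', rfl, rfl⟩
      · have hb' : v ++ [q] = (x ++ [1]) ++ [0] := by simpa using hb
        obtain ⟨rfl, rfl⟩ := snoc_inj hb'
        exact Or.inr ⟨rfl, rfl, Or.inl ⟨x, rfl, rfl⟩⟩
      · have hb' : v ++ [q] = (x ++ 1 :: 0 :: y') ++ [p] := by simpa using hb
        obtain ⟨rfl, rfl⟩ := snoc_inj hb'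
        exact Or.inl ⟨rfl, Or.inl ⟨x, y', rfl, rfl⟩⟩
    · rw [snoc_eq_cons] at ha
      rcases ha with ⟨rfl, rfl, rfl⟩ | ⟨u', rfl, rfl⟩
      · have hb' : v ++ [q] = [1] ++ [0] := by simpa using hb
        obtain ⟨rfl, rfl⟩ := snoc_inj hb'
        exact Or.inr ⟨rfl, rfl, Or.inr ⟨rfl, rfl⟩⟩
      · have hb' : v ++ [q] = (1 :: 0 :: u') ++ [p] := by simpa using hb
        obtain ⟨rfl, rfl⟩ := snoc_inj hb'
        exact Or.inl ⟨rfl, Or.inr ⟨u', rfl, rfl⟩⟩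
  · rintro (⟨rfl, (⟨x, y, rfl, rfl⟩ | ⟨y, rfl, rfl⟩)⟩ | ⟨rfl, rfl, (⟨x, rfl, rfl⟩ | ⟨rfl, rfl⟩)⟩)
    · exact Or.inl ⟨x, y ++ [p], by simp, by simp⟩
    · exact Or.inr ⟨y ++ [p], by simp, by simp⟩
    · exact Or.inl ⟨x, [], by simp, by simp⟩
    · exact Or.inr ⟨[], rfl, rfl⟩

lemma stepDouble_snoc {u v : List ℕ} {p q : ℕ} :
    StepDouble (u ++ [p]) (v ++ [q]) ↔
      (p = q ∧ StepDouble u v) ∨ (p = 2 ∧ q = 0 ∧ ∃ x, u = x ++ [1] ∧ v = x ++ [2]) := by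
  constructor
  · rintro ⟨x, y, ha, hb⟩
    rw [snoc_eq_append_cons_cons] at ha
    rcases ha with ⟨rfl, rfl, rfl⟩ | ⟨y', rfl, rfl⟩
    · have hb' : v ++ [q] = (x ++ [2]) ++ [0] := by simpa using hb
      obtain ⟨rfl, rfl⟩ := snoc_inj hb'
      exact Or.inr ⟨rfl, rfl, x, rfl, rfl⟩
    · have hb' : v ++ [q] = (x ++ 2 :: 0 :: y') ++ [p] := by simpa using hb
      obtain ⟨rfl, rfl⟩ := snoc_inj hb'
      exact Or.inl ⟨rfl, x, y', rfl, rfl⟩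
  · rintro (⟨rfl, x, y, rfl, rfl⟩ | ⟨rfl, rfl, x, rfl, rfl⟩)
    · exact ⟨x, y ++ [p], by simp, by simp⟩
    · exact ⟨x, [], by simp, by simp⟩

lemma step_snoc_same {u v : List ℕ} (d : ℕ) : Step (u ++ [d]) (v ++ [d]) ↔ Step u v := by
  unfold Step
  rw [stepArrow_snoc, stepDouble_snoc]
  constructor
  · rintro ((⟨-, h⟩ | ⟨h1, h2, -⟩) | (⟨-, h⟩ | ⟨h1, h2, -⟩))
    · exact Or.inl h
    · omega
    · exact Or.inr h
    · omega
  · rintro (h | h)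
    · exact Or.inl (Or.inl ⟨rfl, h⟩)
    · exact Or.inr (Or.inl ⟨rfl, h⟩)

lemma step_snoc_zero_two {u v : List ℕ} : ¬ Step (u ++ [0]) (v ++ [2]) := by
  intro h
  unfold Step at h
  rw [stepArrow_snoc, stepDouble_snoc] at h
  rcases h with (⟨h, -⟩ | ⟨h, -, -⟩) | (⟨h, -⟩ | ⟨h, -, -⟩) <;> omega

lemma step_snoc_two_zero {u v : List ℕ} :
    Step (u ++ [2]) (v ++ [0]) ↔
      ((∃ x, u = x ++ [0] ∧ v = x ++ [1]) ∨ (u = [] ∧ v = [1])) ∨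
        ∃ x, u = x ++ [1] ∧ v = x ++ [2] := by
  unfold Step
  rw [stepArrow_snoc, stepDouble_snoc]
  constructor
  · rintro ((⟨h, -⟩ | ⟨-, -, h⟩) | (⟨h, -⟩ | ⟨-, -, h⟩))
    · omega
    · exact Or.inl h
    · omega
    · exact Or.inr h
  · rintro (h | h)
    · exact Or.inl (Or.inr ⟨rfl, rfl, h⟩)
    · exact Or.inr (Or.inr ⟨rfl, rfl, h⟩)

/-- `bFun n` is the number of hyperbinary expansions of `n`. -/
noncomputable def bFun (n : ℕ) : ℕ := (Hyp n).ncard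

/-- The set of arcs of the graph `A(n)`: labeled single-step reductions between
hyperbinary expansions of `n`. -/
def arcs (n : ℕ) : Set (List ℕ × List ℕ) :=
  {p | p.1 ∈ Hyp n ∧ p.2 ∈ Hyp n ∧ Step p.1 p.2}

/-- `aFun n` is the number of arcs of `A(n)`. -/
noncomputable def aFun (n : ℕ) : ℕ := (arcs n).ncard

/-- The cyclomatic number `v(n) = a(n) - b(n) + 1` of the connected graph `A(n)`. -/
noncomputable def vFun (n : ℕ) : ℕ := aFun n + 1 - bFun n

lemma not_step_nil {b : List ℕ} : ¬ Step [] b := by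
  rintro ((⟨x, y, h, -⟩ | ⟨y, h, -⟩) | ⟨x, y, h, -⟩) <;> simp at h

lemma not_step_single {d : ℕ} {b : List ℕ} (hd : d ≠ 2) : ¬ Step [d] b := by
  rintro ((⟨x, y, h, -⟩ | ⟨y, h, -⟩) | ⟨x, y, h, -⟩)
  · rcases x with _ | ⟨a, t⟩
    · simp at h
    · simp only [List.cons_append, List.cons.injEq] at h
      rcases h with ⟨-, h⟩
      simp [List.append_eq_nil_iff] at h
  · simp only [List.cons.injEq] at h
    exact hd h.1
  · rcases x with _ | ⟨a, t⟩
    · simp at h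
    · simp only [List.cons_append, List.cons.injEq] at h
      rcases h with ⟨-, h⟩
      simp [List.append_eq_nil_iff] at h

lemma arcs_zero : arcs 0 = ∅ := by
  ext p
  simp only [arcs, Set.mem_setOf_eq, Set.mem_empty_iff_false, iff_false]
  rintro ⟨h1, -, hs⟩
  rw [hyp_zero] at h1
  rw [Set.mem_singleton_iff] at h1
  rw [h1] at hs
  exact not_step_nil hs

lemma hyp_one : Hyp 1 = {([1] : List ℕ)} := by
  have := hyp_odd 0
  rw [hyp_zero] at this
  simpa using this

lemma arcs_one : arcs 1 = ∅ := by
  ext p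
  simp only [arcs, Set.mem_setOf_eq, Set.mem_empty_iff_false, iff_false]
  rintro ⟨h1, -, hs⟩
  rw [hyp_one, Set.mem_singleton_iff] at h1
  rw [h1] at hs
  exact not_step_single (by norm_num) hs

lemma arcs_odd (n : ℕ) :
    arcs (2 * n + 1) = (fun p : List ℕ × List ℕ => (p.1 ++ [1], p.2 ++ [1])) '' arcs n := by
  ext ⟨w1, w2⟩
  constructor
  · rintro ⟨h1, h2, hs⟩
    rw [hyp_odd] at h1 h2
    obtain ⟨u, hu, hu'⟩ := h1
    obtain ⟨v, hv, hv'⟩ := h2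
    simp only at hu' hv'
    subst hu' hv'
    exact ⟨(u, v), ⟨hu, hv, (step_snoc_same 1).1 hs⟩, rfl⟩
  · rintro ⟨⟨u, v⟩, ⟨hu, hv, hs⟩, h⟩
    simp only [Prod.mk.injEq] at h
    obtain ⟨rfl, rfl⟩ := h
    refine ⟨?_, ?_, (step_snoc_same 1).2 hs⟩ <;> rw [hyp_odd]
    · exact ⟨u, hu, rfl⟩
    · exact ⟨v, hv, rfl⟩

def crossSet (n : ℕ) : Set (List ℕ × List ℕ) :=
  {p | p ∈ arcs (2 * n) ∧ p.1.getLast? = some 2 ∧ p.2.getLast? = some 0}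

lemma arcs_even_decomp (n : ℕ) (hn : 1 ≤ n) :
    arcs (2 * n) =
      (fun p : List ℕ × List ℕ => (p.1 ++ [0], p.2 ++ [0])) '' arcs n ∪
        (fun p : List ℕ × List ℕ => (p.1 ++ [2], p.2 ++ [2])) '' arcs (n - 1) ∪ crossSet n := by
  ext ⟨w1, w2⟩
  constructor
  · rintro ⟨h1, h2, hs⟩
    rw [hyp_even n hn] at h1 h2
    rcases h1 with ⟨u, hu, hu'⟩ | ⟨u, hu, hu'⟩ <;> rcases h2 with ⟨v, hv, hv'⟩ | ⟨v, hv, hv'⟩ <;>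
      simp only at hu' hv' <;> subst hu' <;> subst hv'
    · exact Or.inl (Or.inl ⟨(u, v), ⟨hu, hv, (step_snoc_same 0).1 hs⟩, rfl⟩)
    · exact absurd hs step_snoc_zero_two
    · refine Or.inr ⟨⟨?_, ?_, hs⟩, by simp, by simp⟩ <;> rw [hyp_even n hn]
      · exact Or.inr ⟨u, hu, rfl⟩
      · exact Or.inl ⟨v, hv, rfl⟩
    · exact Or.inl (Or.inr ⟨(u, v), ⟨hu, hv, (step_snoc_same 2).1 hs⟩, rfl⟩)
  · rintro ((⟨⟨u, v⟩, ⟨hu, hv, hs⟩, h⟩ | ⟨⟨u, v⟩, ⟨hu, hv, hs⟩, h⟩) | ⟨hp, -, -⟩)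
    · simp only [Prod.mk.injEq] at h
      obtain ⟨rfl, rfl⟩ := h
      refine ⟨?_, ?_, (step_snoc_same 0).2 hs⟩ <;> rw [hyp_even n hn]
      · exact Or.inl ⟨u, hu, rfl⟩
      · exact Or.inl ⟨v, hv, rfl⟩
    · simp only [Prod.mk.injEq] at h
      obtain ⟨rfl, rfl⟩ := h
      refine ⟨?_, ?_, (step_snoc_same 2).2 hs⟩ <;> rw [hyp_even n hn]
      · exact Or.inr ⟨u, hu, rfl⟩
      · exact Or.inr ⟨v, hv, rfl⟩
    · exact hp

lemma getLast?_snoc (u : List ℕ) (d : ℕ) : (u ++ [d]).getLast? = some d := by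
  simp

lemma crossSet_one : crossSet 1 = {(([2] : List ℕ), ([1, 0] : List ℕ))} := by
  ext ⟨w1, w2⟩
  constructor
  · rintro ⟨⟨h1, h2, -⟩, hl1, hl2⟩
    have e2 : (2 : ℕ) * 1 = 2 := by norm_num
    rw [e2, hyp_even 1 le_rfl] at h1 h2
    have hw1 : w1 = [2] := by
      rcases h1 with ⟨u, hu, hu'⟩ | ⟨u, hu, hu'⟩ <;> simp only at hu'
      · exfalso; rw [← hu'] at hl1; simp at hl1
      · rw [show (1:ℕ) - 1 = 0 from rfl, hyp_zero, Set.mem_singleton_iff] at hu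
        subst hu; exact hu'.symm
    have hw2 : w2 = [1, 0] := by
      rcases h2 with ⟨u, hu, hu'⟩ | ⟨u, hu, hu'⟩ <;> simp only at hu'
      · rw [hyp_one, Set.mem_singleton_iff] at hu
        subst hu; exact hu'.symm
      · exfalso; rw [← hu'] at hl2; simp at hl2
    simp [hw1, hw2]
  · rintro h
    rw [Set.mem_singleton_iff, Prod.mk.injEq] at h
    obtain ⟨rfl, rfl⟩ := h
    refine ⟨⟨?_, ?_, Or.inl (Or.inr ⟨[], rfl, rfl⟩)⟩, by simp, by simp⟩
    · rw [show (2:ℕ)*1 = 2 from rfl, hyp_even 1 le_rfl]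
      exact Or.inr ⟨[], by rw [show (1:ℕ) - 1 = 0 from rfl, hyp_zero]; rfl, rfl⟩
    · rw [show (2:ℕ)*1 = 2 from rfl, hyp_even 1 le_rfl]
      refine Or.inl ⟨[1], by rw [hyp_one]; rfl, rfl⟩

lemma crossSet_odd (h : ℕ) (hh : 1 ≤ h) :
    crossSet (2 * h + 1) = (fun x => (x ++ [0, 2], x ++ [1, 0])) '' Hyp h := by
  ext ⟨w1, w2⟩
  constructor
  · rintro ⟨⟨h1, h2, hs⟩, hl1, hl2⟩
    rw [hyp_even (2 * h + 1) (by omega)] at h1 h2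
    rcases h1 with ⟨u, hu, hu'⟩ | ⟨u, hu, hu'⟩
    · exfalso; simp only at hu'; rw [← hu'] at hl1; simp at hl1
    rcases h2 with ⟨v, hv, hv'⟩ | ⟨v, hv, hv'⟩
    swap
    · exfalso; simp only at hv'; rw [← hv'] at hl2; simp at hl2
    simp only at hu' hv'
    subst hu' hv'
    rw [show 2 * h + 1 - 1 = 2 * h by omega] at hu
    rw [step_snoc_two_zero] at hs
    rcases hs with (⟨x, rfl, rfl⟩ | ⟨rfl, rfl⟩) | ⟨x, rfl, rfl⟩
    · rw [hyp_even h hh] at hu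
      rcases hu with ⟨z, hz, hz'⟩ | ⟨z, hz, hz'⟩ <;> simp only at hz'
      · obtain ⟨rfl, -⟩ := snoc_inj hz'
        exact ⟨z, hz, by simp⟩
      · exfalso; obtain ⟨-, hq⟩ := snoc_inj hz'; omega
    · exfalso; have := hu.2.2; simp [wordVal] at this; omega
    · exfalso; have := hu.2.2; rw [wordVal_snoc] at this; omega
  · rintro ⟨x, hx, hp⟩
    simp only [Prod.mk.injEq] at hp
    obtain ⟨rfl, rfl⟩ := hp
    have m1 : x ++ [0] ∈ Hyp (2 * h) := by
      rw [hyp_even h hh]; exact Or.inl ⟨x, hx, rfl⟩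
    have m2 : x ++ [1] ∈ Hyp (2 * h + 1) := by
      rw [hyp_odd h]; exact ⟨x, hx, rfl⟩
    refine ⟨⟨?_, ?_, ?_⟩, by simp, by simp⟩
    · rw [hyp_even (2 * h + 1) (by omega)]
      refine Or.inr ⟨x ++ [0], by rw [show 2 * h + 1 - 1 = 2 * h by omega]; exact m1, by simp⟩
    · rw [hyp_even (2 * h + 1) (by omega)]
      exact Or.inl ⟨x ++ [1], m2, by simp⟩
    · have : Step ((x ++ [0]) ++ [2]) ((x ++ [1]) ++ [0]) :=
        step_snoc_two_zero.2 (Or.inl (Or.inl ⟨x, rfl, rfl⟩))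
      simpa using this

lemma crossSet_even (h : ℕ) :
    crossSet (2 * h + 2) = (fun x => (x ++ [1, 2], x ++ [2, 0])) '' Hyp h := by
  ext ⟨w1, w2⟩
  constructor
  · rintro ⟨⟨h1, h2, hs⟩, hl1, hl2⟩
    rw [hyp_even (2 * h + 2) (by omega)] at h1 h2
    rcases h1 with ⟨u, hu, hu'⟩ | ⟨u, hu, hu'⟩
    · exfalso; simp only at hu'; rw [← hu'] at hl1; simp at hl1
    rcases h2 with ⟨v, hv, hv'⟩ | ⟨v, hv, hv'⟩
    swap
    · exfalso; simp only at hv'; rw [← hv'] at hl2; simp at hl2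
    simp only at hu' hv'
    subst hu' hv'
    rw [show 2 * h + 2 - 1 = 2 * h + 1 by omega] at hu
    rw [step_snoc_two_zero] at hs
    rcases hs with (⟨x, rfl, rfl⟩ | ⟨rfl, rfl⟩) | ⟨x, rfl, rfl⟩
    · exfalso; have := hu.2.2; rw [wordVal_snoc] at this; omega
    · exfalso; have := hu.2.2; simp [wordVal] at this
    · rw [hyp_odd h] at hu
      obtain ⟨z, hz, hz'⟩ := hu
      simp only at hz'
      obtain ⟨rfl, -⟩ := snoc_inj hz'
      exact ⟨z, hz, by simp⟩
  · rintro ⟨x, hx, hp⟩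
    simp only [Prod.mk.injEq] at hp
    obtain ⟨rfl, rfl⟩ := hp
    have m1 : x ++ [1] ∈ Hyp (2 * h + 1) := by
      rw [hyp_odd h]; exact ⟨x, hx, rfl⟩
    have m2 : x ++ [2] ∈ Hyp (2 * h + 2) := by
      rw [show 2 * h + 2 = 2 * (h + 1) by ring, hyp_even (h + 1) (by omega)]
      exact Or.inr ⟨x, by simpa using hx, rfl⟩
    refine ⟨⟨?_, ?_, ?_⟩, by simp, by simp⟩
    · rw [hyp_even (2 * h + 2) (by omega)]
      refine Or.inr ⟨x ++ [1], by rw [show 2 * h + 2 - 1 = 2 * h + 1 by omega]; exact m1, by simp⟩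
    · rw [hyp_even (2 * h + 2) (by omega)]
      exact Or.inl ⟨x ++ [2], m2, by simp⟩
    · have : Step ((x ++ [1]) ++ [2]) ((x ++ [2]) ++ [0]) :=
        step_snoc_two_zero.2 (Or.inr ⟨x, rfl, rfl⟩)
      simpa using this

lemma arcs_finite (n : ℕ) : (arcs n).Finite :=
  ((hyp_finite n).prod (hyp_finite n)).subset (fun p hp => Set.mem_prod.2 ⟨hp.1, hp.2.1⟩)

lemma pair_app_injective (l1 l2 : List ℕ) :
    Function.Injective (fun p : List ℕ × List ℕ => (p.1 ++ l1, p.2 ++ l2)) := by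
  rintro ⟨a1, a2⟩ ⟨b1, b2⟩ hab
  simp only [Prod.mk.injEq] at hab
  exact Prod.ext (List.append_left_injective l1 hab.1) (List.append_left_injective l2 hab.2)

lemma bFun_zero : bFun 0 = 1 := by rw [bFun, hyp_zero]; exact Set.ncard_singleton _

lemma bFun_odd (n : ℕ) : bFun (2 * n + 1) = bFun n := by
  rw [bFun, hyp_odd, Set.ncard_image_of_injective _ (List.append_left_injective [1])]
  rfl

lemma bFun_even (n : ℕ) (hn : 1 ≤ n) : bFun (2 * n) = bFun n + bFun (n - 1) := by
  rw [bFun, hyp_even n hn]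
  rw [Set.ncard_union_eq ?dis ((hyp_finite n).image _) ((hyp_finite (n-1)).image _)]
  · rw [Set.ncard_image_of_injective _ (List.append_left_injective [0]),
      Set.ncard_image_of_injective _ (List.append_left_injective [2])]
    rfl
  case dis =>
    rw [Set.disjoint_left]
    rintro w ⟨u, -, rfl⟩ ⟨v, -, hv⟩
    simp only at hv
    have := (snoc_inj hv).2
    omega

lemma aFun_zero : aFun 0 = 0 := by rw [aFun, arcs_zero]; simp

lemma aFun_odd (n : ℕ) : aFun (2 * n + 1) = aFun n := by
  rw [aFun, arcs_odd, Set.ncard_image_of_injective _ (pair_app_injective [1] [1])]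
  rfl

lemma crossSet_ncard (n : ℕ) (hn : 1 ≤ n) : (crossSet n).ncard = bFun ((n - 1) / 2) := by
  obtain ⟨k, rfl | rfl⟩ := Nat.even_or_odd' n
  · obtain ⟨m, rfl⟩ : ∃ m, k = m + 1 := ⟨k - 1, by omega⟩
    rw [show 2 * (m + 1) = 2 * m + 2 by ring, crossSet_even m,
      Set.ncard_image_of_injective _ ?inj, show (2 * m + 2 - 1) / 2 = m by omega, bFun]
    case inj =>
      intro a b hab
      simp only [Prod.mk.injEq] at hab
      exact List.append_left_injective [1, 2] hab.1
  · rcases Nat.eq_zero_or_pos k with rfl | hk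
    · rw [show 2 * 0 + 1 = 1 by ring, crossSet_one, Set.ncard_singleton,
        show (1 - 1) / 2 = 0 by omega, bFun_zero]
    · rw [crossSet_odd k hk, Set.ncard_image_of_injective _ ?inj,
        show (2 * k + 1 - 1) / 2 = k by omega, bFun]
      case inj =>
        intro a b hab
        simp only [Prod.mk.injEq] at hab
        exact List.append_left_injective [0, 2] hab.1

lemma aFun_even (n : ℕ) (hn : 1 ≤ n) :
    aFun (2 * n) = aFun n + aFun (n - 1) + bFun ((n - 1) / 2) := by
  have fA := (arcs_finite n).image (fun p : List ℕ × List ℕ => (p.1 ++ [0], p.2 ++ [0]))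
  have fB := (arcs_finite (n - 1)).image (fun p : List ℕ × List ℕ => (p.1 ++ [2], p.2 ++ [2]))
  have fC : (crossSet n).Finite := (arcs_finite (2 * n)).subset (fun p hp => hp.1)
  have dAB : Disjoint ((fun p : List ℕ × List ℕ => (p.1 ++ [0], p.2 ++ [0])) '' arcs n)
      ((fun p : List ℕ × List ℕ => (p.1 ++ [2], p.2 ++ [2])) '' arcs (n - 1)) := by
    rw [Set.disjoint_left]
    rintro p ⟨u, -, rfl⟩ ⟨v, -, hv⟩
    simp only [Prod.mk.injEq] at hv
    have := (snoc_inj hv.1).2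
    omega
  have dC : Disjoint ((fun p : List ℕ × List ℕ => (p.1 ++ [0], p.2 ++ [0])) '' arcs n ∪
      (fun p : List ℕ × List ℕ => (p.1 ++ [2], p.2 ++ [2])) '' arcs (n - 1)) (crossSet n) := by
    rw [Set.disjoint_left]
    rintro p (⟨u, -, rfl⟩ | ⟨u, -, rfl⟩) ⟨-, hl1, hl2⟩
    · simp at hl1
    · simp at hl2
  rw [aFun, arcs_even_decomp n hn, Set.ncard_union_eq dC (fA.union fB) fC,
    Set.ncard_union_eq dAB fA fB,
    Set.ncard_image_of_injective _ (pair_app_injective [0] [0]),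
    Set.ncard_image_of_injective _ (pair_app_injective [2] [2]),
    crossSet_ncard n hn]
  rfl

def Brec : ℕ → ℕ
  | 0 => 1
  | (n + 1) =>
    if (n + 1) % 2 = 0 then Brec ((n + 1) / 2) + Brec ((n + 1) / 2 - 1)
    else Brec ((n + 1) / 2)
decreasing_by all_goals omega

def Arec : ℕ → ℕ
  | 0 => 0
  | (n + 1) =>
    if (n + 1) % 2 = 0 then
      Arec ((n + 1) / 2) + Arec ((n + 1) / 2 - 1) + Brec (((n + 1) / 2 - 1) / 2)
    else Arec ((n + 1) / 2)
decreasing_by all_goals omega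

lemma Brec_zero : Brec 0 = 1 := by rw [Brec]

lemma Brec_odd (n : ℕ) : Brec (2 * n + 1) = Brec n := by
  rw [Brec]
  rw [if_neg (by omega), show (2 * n + 1) / 2 = n by omega]

lemma Brec_even (n : ℕ) (hn : 1 ≤ n) : Brec (2 * n) = Brec n + Brec (n - 1) := by
  obtain ⟨m, rfl⟩ : ∃ m, n = m + 1 := ⟨n - 1, by omega⟩
  rw [show 2 * (m + 1) = (2 * m + 1) + 1 by ring, Brec]
  rw [if_pos (by omega), show (2 * m + 1 + 1) / 2 = m + 1 by omega]

lemma Arec_zero : Arec 0 = 0 := by rw [Arec]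

lemma Arec_odd (n : ℕ) : Arec (2 * n + 1) = Arec n := by
  rw [Arec]
  rw [if_neg (by omega), show (2 * n + 1) / 2 = n by omega]

lemma Arec_even (n : ℕ) (hn : 1 ≤ n) :
    Arec (2 * n) = Arec n + Arec (n - 1) + Brec ((n - 1) / 2) := by
  obtain ⟨m, rfl⟩ : ∃ m, n = m + 1 := ⟨n - 1, by omega⟩
  rw [show 2 * (m + 1) = (2 * m + 1) + 1 by ring, Arec]
  rw [if_pos (by omega), show (2 * m + 1 + 1) / 2 = m + 1 by omega]

lemma bFun_eq_Brec (n : ℕ) : bFun n = Brec n := by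
  induction n using Nat.strong_induction_on with
  | _ n ih =>
    rcases Nat.eq_zero_or_pos n with rfl | hn
    · rw [bFun_zero, Brec_zero]
    · obtain ⟨k, rfl | rfl⟩ := Nat.even_or_odd' n
      · have hk : 1 ≤ k := by omega
        rw [bFun_even k hk, Brec_even k hk, ih k (by omega), ih (k - 1) (by omega)]
      · rw [bFun_odd k, Brec_odd k, ih k (by omega)]

lemma aFun_eq_Arec (n : ℕ) : aFun n = Arec n := by
  induction n using Nat.strong_induction_on with
  | _ n ih =>
    rcases Nat.eq_zero_or_pos n with rfl | hn
    · rw [aFun_zero, Arec_zero]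
    · obtain ⟨k, rfl | rfl⟩ := Nat.even_or_odd' n
      · have hk : 1 ≤ k := by omega
        rw [aFun_even k hk, Arec_even k hk, ih k (by omega), ih (k - 1) (by omega),
          bFun_eq_Brec]
      · rw [aFun_odd k, Arec_odd k, ih k (by omega)]

def Vr (n : ℕ) : ℕ := Arec n + 1 - Brec n

lemma Brec_pos (n : ℕ) : 1 ≤ Brec n := by
  induction n using Nat.strong_induction_on with
  | _ n ih =>
    rcases Nat.eq_zero_or_pos n with rfl | hn
    · rw [Brec_zero]
    · obtain ⟨k, rfl | rfl⟩ := Nat.even_or_odd' n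
      · rw [Brec_even k (by omega)]
        have := ih k (by omega)
        omega
      · rw [Brec_odd k]; exact ih k (by omega)

lemma Brec_le (n : ℕ) : Brec n ≤ Arec n + 1 := by
  induction n using Nat.strong_induction_on with
  | _ n ih =>
    rcases Nat.eq_zero_or_pos n with rfl | hn
    · rw [Brec_zero, Arec_zero]
    · obtain ⟨k, rfl | rfl⟩ := Nat.even_or_odd' n
      · have hk : 1 ≤ k := by omega
        rw [Brec_even k hk, Arec_even k hk]
        have h1 := ih k (by omega)
        have h2 := ih (k - 1) (by omega)
        have h3 := Brec_pos ((k - 1) / 2)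
        omega
      · rw [Brec_odd k, Arec_odd k]; exact ih k (by omega)

lemma Vr_odd (n : ℕ) : Vr (2 * n + 1) = Vr n := by
  unfold Vr; rw [Arec_odd, Brec_odd]

lemma Vr_even (n : ℕ) (hn : 1 ≤ n) :
    Vr (2 * n) + 1 = Vr n + Vr (n - 1) + Brec ((n - 1) / 2) := by
  unfold Vr
  rw [Arec_even n hn, Brec_even n hn]
  have h1 := Brec_le n
  have h2 := Brec_le (n - 1)
  have h3 := Brec_pos ((n - 1) / 2)
  omega

def csF (k : ℕ) : ℕ × ℕ × ℕ × ℕ × ℕ :=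
  (min (Vr (k - 1)) 4, min (Vr k) 4, min (Vr (2 * k)) 4, min (Brec (k - 1)) 5, min (Brec k) 5)

def step0 (s : ℕ × ℕ × ℕ × ℕ × ℕ) : ℕ × ℕ × ℕ × ℕ × ℕ :=
  (s.1, s.2.2.1, min (s.2.2.1 + s.1 + s.2.2.2.1 - 1) 4, s.2.2.2.1,
    min (s.2.2.2.1 + s.2.2.2.2) 5)

def step1 (s : ℕ × ℕ × ℕ × ℕ × ℕ) : ℕ × ℕ × ℕ × ℕ × ℕ :=
  (s.2.2.1, s.2.1, min (s.2.2.1 + s.2.1 + s.2.2.2.2 - 1) 4,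
    min (s.2.2.2.1 + s.2.2.2.2) 5, s.2.2.2.2)

lemma csF_two_mul (k : ℕ) (hk : 1 ≤ k) : csF (2 * k) = step0 (csF k) := by
  have e1 : 2 * k - 1 = 2 * (k - 1) + 1 := by omega
  have c1 : Vr (2 * k - 1) = Vr (k - 1) := by rw [e1, Vr_odd]
  have c4 : Brec (2 * k - 1) = Brec (k - 1) := by rw [e1, Brec_odd]
  have c5 : Brec (2 * k) = Brec k + Brec (k - 1) := Brec_even k hk
  have hv : Vr (2 * (2 * k)) + 1 = Vr (2 * k) + Vr (k - 1) + Brec (k - 1) := by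
    rw [Vr_even (2 * k) (by omega), c1, e1, show (2 * (k - 1) + 1) / 2 = k - 1 by omega]
  have hp := Brec_pos (k - 1)
  simp only [csF, step0, Prod.mk.injEq]
  repeat' apply And.intro
  all_goals (try trivial)
  all_goals omega

lemma csF_two_mul_add_one (k : ℕ) (hk : 1 ≤ k) : csF (2 * k + 1) = step1 (csF k) := by
  have e0 : 2 * k + 1 - 1 = 2 * k := by omega
  have c1 : Vr (2 * k + 1 - 1) = Vr (2 * k) := by rw [e0]
  have c2 : Vr (2 * k + 1) = Vr k := Vr_odd k
  have c4 : Brec (2 * k + 1 - 1) = Brec k + Brec (k - 1) := by rw [e0, Brec_even k hk]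
  have c5 : Brec (2 * k + 1) = Brec k := Brec_odd k
  have hv : Vr (2 * (2 * k + 1)) + 1 = Vr k + Vr (2 * k) + Brec k := by
    rw [Vr_even (2 * k + 1) (by omega), e0, show 2 * k / 2 = k by omega, c2]
  have hp := Brec_pos k
  simp only [csF, step1, Prod.mk.injEq]
  repeat' apply And.intro
  all_goals (try trivial)
  all_goals omega

lemma Vr_0 : Vr 0 = 0 := by rw [Vr, Arec_zero, Brec_zero]

lemma csF_0 : csF 0 = (0, 0, 0, 1, 1) := by
  have hA1 : Arec 1 = 0 := by have := Arec_odd 0; rw [Arec_zero] at this; simpa using this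
  have hB1 : Brec 1 = 1 := by have := Brec_odd 0; rw [Brec_zero] at this; simpa using this
  simp [csF, Vr, Arec_zero, Brec_zero]

lemma csF_1 : csF 1 = (0, 0, 0, 1, 1) := by
  have hA1 : Arec 1 = 0 := by have := Arec_odd 0; rw [Arec_zero] at this; simpa using this
  have hB1 : Brec 1 = 1 := by have := Brec_odd 0; rw [Brec_zero] at this; simpa using this
  have hB0 := Brec_zero
  have hA0 := Arec_zero
  have hB2 : Brec 2 = 2 := by
    have := Brec_even 1 le_rfl
    norm_num at this
    omega
  have hA2 : Arec 2 = 1 := by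
    have := Arec_even 1 le_rfl
    norm_num at this
    omega
  simp [csF, Vr, Arec_zero, Brec_zero, hA1, hB1, hA2, hB2]

lemma csF_2 : csF 2 = (0, 0, 0, 1, 2) := by
  rw [show (2:ℕ) = 2 * 1 by norm_num, csF_two_mul 1 (by norm_num), csF_1]; decide

lemma csF_3 : csF 3 = (0, 0, 0, 2, 1) := by
  rw [show (3:ℕ) = 2 * 1 + 1 by norm_num, csF_two_mul_add_one 1 (by norm_num), csF_1]; decide

lemma csF_4 : csF 4 = (0, 0, 0, 1, 3) := by
  rw [show (4:ℕ) = 2 * 2 by norm_num, csF_two_mul 2 (by norm_num), csF_2]; decide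

lemma csF_5 : csF 5 = (0, 0, 1, 3, 2) := by
  rw [show (5:ℕ) = 2 * 2 + 1 by norm_num, csF_two_mul_add_one 2 (by norm_num), csF_2]; decide

lemma csF_6 : csF 6 = (0, 0, 1, 2, 3) := by
  rw [show (6:ℕ) = 2 * 3 by norm_num, csF_two_mul 3 (by norm_num), csF_3]; decide

lemma csF_7 : csF 7 = (0, 0, 0, 3, 1) := by
  rw [show (7:ℕ) = 2 * 3 + 1 by norm_num, csF_two_mul_add_one 3 (by norm_num), csF_3]; decide

lemma csF_8 : csF 8 = (0, 0, 0, 1, 4) := by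
  rw [show (8:ℕ) = 2 * 4 by norm_num, csF_two_mul 4 (by norm_num), csF_4]; decide

lemma csF_9 : csF 9 = (0, 0, 2, 4, 3) := by
  rw [show (9:ℕ) = 2 * 4 + 1 by norm_num, csF_two_mul_add_one 4 (by norm_num), csF_4]; decide

lemma csF_10 : csF 10 = (0, 1, 3, 3, 5) := by
  rw [show (10:ℕ) = 2 * 5 by norm_num, csF_two_mul 5 (by norm_num), csF_5]; decide

lemma csF_11 : csF 11 = (1, 0, 2, 5, 2) := by
  rw [show (11:ℕ) = 2 * 5 + 1 by norm_num, csF_two_mul_add_one 5 (by norm_num), csF_5]; decide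

lemma csF_12 : csF 12 = (0, 1, 2, 2, 5) := by
  rw [show (12:ℕ) = 2 * 6 by norm_num, csF_two_mul 6 (by norm_num), csF_6]; decide

lemma csF_13 : csF 13 = (1, 0, 3, 5, 3) := by
  rw [show (13:ℕ) = 2 * 6 + 1 by norm_num, csF_two_mul_add_one 6 (by norm_num), csF_6]; decide

lemma csF_14 : csF 14 = (0, 0, 2, 3, 4) := by
  rw [show (14:ℕ) = 2 * 7 by norm_num, csF_two_mul 7 (by norm_num), csF_7]; decide

lemma csF_15 : csF 15 = (0, 0, 0, 4, 1) := by
  rw [show (15:ℕ) = 2 * 7 + 1 by norm_num, csF_two_mul_add_one 7 (by norm_num), csF_7]; decide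

lemma csF_16 : csF 16 = (0, 0, 0, 1, 5) := by
  rw [show (16:ℕ) = 2 * 8 by norm_num, csF_two_mul 8 (by norm_num), csF_8]; decide

lemma csF_17 : csF 17 = (0, 0, 3, 5, 4) := by
  rw [show (17:ℕ) = 2 * 8 + 1 by norm_num, csF_two_mul_add_one 8 (by norm_num), csF_8]; decide

lemma csF_18 : csF 18 = (0, 2, 4, 4, 5) := by
  rw [show (18:ℕ) = 2 * 9 by norm_num, csF_two_mul 9 (by norm_num), csF_9]; decide

lemma csF_19 : csF 19 = (2, 0, 4, 5, 3) := by
  rw [show (19:ℕ) = 2 * 9 + 1 by norm_num, csF_two_mul_add_one 9 (by norm_num), csF_9]; decide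

lemma csF_20 : csF 20 = (0, 3, 4, 3, 5) := by
  rw [show (20:ℕ) = 2 * 10 by norm_num, csF_two_mul 10 (by norm_num), csF_10]; decide

lemma csF_21 : csF 21 = (3, 1, 4, 5, 5) := by
  rw [show (21:ℕ) = 2 * 10 + 1 by norm_num, csF_two_mul_add_one 10 (by norm_num), csF_10]; decide

lemma csF_22 : csF 22 = (1, 2, 4, 5, 5) := by
  rw [show (22:ℕ) = 2 * 11 by norm_num, csF_two_mul 11 (by norm_num), csF_11]; decide

lemma csF_23 : csF 23 = (2, 0, 3, 5, 2) := by
  rw [show (23:ℕ) = 2 * 11 + 1 by norm_num, csF_two_mul_add_one 11 (by norm_num), csF_11]; decide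

lemma csF_24 : csF 24 = (0, 2, 3, 2, 5) := by
  rw [show (24:ℕ) = 2 * 12 by norm_num, csF_two_mul 12 (by norm_num), csF_12]; decide

lemma csF_25 : csF 25 = (2, 1, 4, 5, 5) := by
  rw [show (25:ℕ) = 2 * 12 + 1 by norm_num, csF_two_mul_add_one 12 (by norm_num), csF_12]; decide

lemma csF_26 : csF 26 = (1, 3, 4, 5, 5) := by
  rw [show (26:ℕ) = 2 * 13 by norm_num, csF_two_mul 13 (by norm_num), csF_13]; decide

lemma csF_27 : csF 27 = (3, 0, 4, 5, 3) := by
  rw [show (27:ℕ) = 2 * 13 + 1 by norm_num, csF_two_mul_add_one 13 (by norm_num), csF_13]; decide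

lemma csF_28 : csF 28 = (0, 2, 4, 3, 5) := by
  rw [show (28:ℕ) = 2 * 14 by norm_num, csF_two_mul 14 (by norm_num), csF_14]; decide

lemma csF_29 : csF 29 = (2, 0, 4, 5, 4) := by
  rw [show (29:ℕ) = 2 * 14 + 1 by norm_num, csF_two_mul_add_one 14 (by norm_num), csF_14]; decide

lemma csF_30 : csF 30 = (0, 0, 3, 4, 5) := by
  rw [show (30:ℕ) = 2 * 15 by norm_num, csF_two_mul 15 (by norm_num), csF_15]; decide

lemma csF_31 : csF 31 = (0, 0, 0, 5, 1) := by
  rw [show (31:ℕ) = 2 * 15 + 1 by norm_num, csF_two_mul_add_one 15 (by norm_num), csF_15]; decide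

lemma csF_32 : csF 32 = (0, 0, 0, 1, 5) := by
  rw [show (32:ℕ) = 2 * 16 by norm_num, csF_two_mul 16 (by norm_num), csF_16]; decide

lemma csF_33 : csF 33 = (0, 0, 4, 5, 5) := by
  rw [show (33:ℕ) = 2 * 16 + 1 by norm_num, csF_two_mul_add_one 16 (by norm_num), csF_16]; decide

lemma csF_34 : csF 34 = (0, 3, 4, 5, 5) := by
  rw [show (34:ℕ) = 2 * 17 by norm_num, csF_two_mul 17 (by norm_num), csF_17]; decide

lemma csF_35 : csF 35 = (3, 0, 4, 5, 4) := by
  rw [show (35:ℕ) = 2 * 17 + 1 by norm_num, csF_two_mul_add_one 17 (by norm_num), csF_17]; decide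

lemma csF_36 : csF 36 = (0, 4, 4, 4, 5) := by
  rw [show (36:ℕ) = 2 * 18 by norm_num, csF_two_mul 18 (by norm_num), csF_18]; decide

lemma csF_37 : csF 37 = (4, 2, 4, 5, 5) := by
  rw [show (37:ℕ) = 2 * 18 + 1 by norm_num, csF_two_mul_add_one 18 (by norm_num), csF_18]; decide

lemma csF_38 : csF 38 = (2, 4, 4, 5, 5) := by
  rw [show (38:ℕ) = 2 * 19 by norm_num, csF_two_mul 19 (by norm_num), csF_19]; decide

lemma csF_39 : csF 39 = (4, 0, 4, 5, 3) := by
  rw [show (39:ℕ) = 2 * 19 + 1 by norm_num, csF_two_mul_add_one 19 (by norm_num), csF_19]; decide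

lemma csF_40 : csF 40 = (0, 4, 4, 3, 5) := by
  rw [show (40:ℕ) = 2 * 20 by norm_num, csF_two_mul 20 (by norm_num), csF_20]; decide

lemma csF_41 : csF 41 = (4, 3, 4, 5, 5) := by
  rw [show (41:ℕ) = 2 * 20 + 1 by norm_num, csF_two_mul_add_one 20 (by norm_num), csF_20]; decide

lemma csF_42 : csF 42 = (3, 4, 4, 5, 5) := by
  rw [show (42:ℕ) = 2 * 21 by norm_num, csF_two_mul 21 (by norm_num), csF_21]; decide

lemma csF_43 : csF 43 = (4, 1, 4, 5, 5) := by
  rw [show (43:ℕ) = 2 * 21 + 1 by norm_num, csF_two_mul_add_one 21 (by norm_num), csF_21]; decide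

lemma csF_44 : csF 44 = (1, 4, 4, 5, 5) := by
  rw [show (44:ℕ) = 2 * 22 by norm_num, csF_two_mul 22 (by norm_num), csF_22]; decide

lemma csF_45 : csF 45 = (4, 2, 4, 5, 5) := by
  rw [show (45:ℕ) = 2 * 22 + 1 by norm_num, csF_two_mul_add_one 22 (by norm_num), csF_22]; decide

lemma csF_46 : csF 46 = (2, 3, 4, 5, 5) := by
  rw [show (46:ℕ) = 2 * 23 by norm_num, csF_two_mul 23 (by norm_num), csF_23]; decide

lemma csF_47 : csF 47 = (3, 0, 4, 5, 2) := by
  rw [show (47:ℕ) = 2 * 23 + 1 by norm_num, csF_two_mul_add_one 23 (by norm_num), csF_23]; decide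

lemma csF_48 : csF 48 = (0, 3, 4, 2, 5) := by
  rw [show (48:ℕ) = 2 * 24 by norm_num, csF_two_mul 24 (by norm_num), csF_24]; decide

lemma csF_49 : csF 49 = (3, 2, 4, 5, 5) := by
  rw [show (49:ℕ) = 2 * 24 + 1 by norm_num, csF_two_mul_add_one 24 (by norm_num), csF_24]; decide

lemma csF_50 : csF 50 = (2, 4, 4, 5, 5) := by
  rw [show (50:ℕ) = 2 * 25 by norm_num, csF_two_mul 25 (by norm_num), csF_25]; decide

lemma csF_51 : csF 51 = (4, 1, 4, 5, 5) := by
  rw [show (51:ℕ) = 2 * 25 + 1 by norm_num, csF_two_mul_add_one 25 (by norm_num), csF_25]; decide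

lemma csF_52 : csF 52 = (1, 4, 4, 5, 5) := by
  rw [show (52:ℕ) = 2 * 26 by norm_num, csF_two_mul 26 (by norm_num), csF_26]; decide

lemma csF_53 : csF 53 = (4, 3, 4, 5, 5) := by
  rw [show (53:ℕ) = 2 * 26 + 1 by norm_num, csF_two_mul_add_one 26 (by norm_num), csF_26]; decide

lemma csF_54 : csF 54 = (3, 4, 4, 5, 5) := by
  rw [show (54:ℕ) = 2 * 27 by norm_num, csF_two_mul 27 (by norm_num), csF_27]; decide

lemma csF_55 : csF 55 = (4, 0, 4, 5, 3) := by
  rw [show (55:ℕ) = 2 * 27 + 1 by norm_num, csF_two_mul_add_one 27 (by norm_num), csF_27]; decide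

lemma csF_56 : csF 56 = (0, 4, 4, 3, 5) := by
  rw [show (56:ℕ) = 2 * 28 by norm_num, csF_two_mul 28 (by norm_num), csF_28]; decide

lemma csF_57 : csF 57 = (4, 2, 4, 5, 5) := by
  rw [show (57:ℕ) = 2 * 28 + 1 by norm_num, csF_two_mul_add_one 28 (by norm_num), csF_28]; decide

lemma csF_58 : csF 58 = (2, 4, 4, 5, 5) := by
  rw [show (58:ℕ) = 2 * 29 by norm_num, csF_two_mul 29 (by norm_num), csF_29]; decide

lemma csF_59 : csF 59 = (4, 0, 4, 5, 4) := by
  rw [show (59:ℕ) = 2 * 29 + 1 by norm_num, csF_two_mul_add_one 29 (by norm_num), csF_29]; decide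

lemma csF_60 : csF 60 = (0, 3, 4, 4, 5) := by
  rw [show (60:ℕ) = 2 * 30 by norm_num, csF_two_mul 30 (by norm_num), csF_30]; decide

lemma csF_61 : csF 61 = (3, 0, 4, 5, 5) := by
  rw [show (61:ℕ) = 2 * 30 + 1 by norm_num, csF_two_mul_add_one 30 (by norm_num), csF_30]; decide

def GoodList : List (ℕ × ℕ × ℕ × ℕ × ℕ) :=
  [(0, 0, 0, 1, 5),
    (0, 0, 0, 5, 1),
    (0, 0, 4, 5, 5),
    (0, 3, 4, 2, 5),
    (0, 3, 4, 4, 5),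
    (0, 3, 4, 5, 5),
    (0, 4, 4, 2, 5),
    (0, 4, 4, 3, 5),
    (0, 4, 4, 4, 5),
    (0, 4, 4, 5, 5),
    (1, 4, 4, 5, 5),
    (2, 3, 4, 5, 5),
    (2, 4, 4, 5, 5),
    (3, 0, 4, 5, 2),
    (3, 0, 4, 5, 4),
    (3, 0, 4, 5, 5),
    (3, 2, 4, 5, 5),
    (3, 4, 4, 5, 5),
    (4, 0, 4, 5, 2),
    (4, 0, 4, 5, 3),
    (4, 0, 4, 5, 4),
    (4, 0, 4, 5, 5),
    (4, 1, 4, 5, 5),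
    (4, 2, 4, 5, 5),
    (4, 3, 4, 5, 5),
    (4, 4, 4, 5, 5)]

lemma good_closed : ∀ s ∈ GoodList, step0 s ∈ GoodList ∧ step1 s ∈ GoodList := by decide

lemma good_third : ∀ s ∈ GoodList, s.2.2.1 ≠ 3 := by decide

lemma csF_good (k : ℕ) (hk : 31 ≤ k) : csF k ∈ GoodList := by
  induction k using Nat.strong_induction_on with
  | _ k ih =>
    by_cases h : k ≤ 61
    · interval_cases k <;>
      simp only [csF_31, csF_32, csF_33, csF_34, csF_35, csF_36, csF_37, csF_38, csF_39, csF_40, csF_41, csF_42, csF_43, csF_44, csF_45, csF_46, csF_47, csF_48, csF_49, csF_50, csF_51, csF_52, csF_53, csF_54, csF_55, csF_56, csF_57, csF_58, csF_59, csF_60, csF_61] <;> decide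
    · obtain ⟨j, rfl | rfl⟩ := Nat.even_or_odd' k
      · rw [csF_two_mul j (by omega)]
        exact (good_closed _ (ih j (by omega) (by omega))).1
      · rw [csF_two_mul_add_one j (by omega)]
        exact (good_closed _ (ih j (by omega) (by omega))).2

/-- An even nonnegative integer `n` satisfies `v(n) = 3` iff
`n ∈ {20, 26, 34, 46, 48, 60}`. -/
theorem v_eq_three_iff_even (n : ℕ) (hn : Even n) :
    vFun n = 3 ↔ n ∈ ({20, 26, 34, 46, 48, 60} : Set ℕ) := by
  obtain ⟨k, rfl⟩ := hn
  have hvf : vFun (k + k) = Vr (k + k) := by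
    rw [vFun, aFun_eq_Arec, bFun_eq_Brec, Vr]
  rw [hvf, show k + k = 2 * k by ring]
  simp only [Set.mem_insert_iff, Set.mem_singleton_iff]
  have hproj : (csF k).2.2.1 = min (Vr (2 * k)) 4 := rfl
  rcases le_or_gt k 30 with hk | hk
  · have key : Vr (2 * k) = 3 ↔ (csF k).2.2.1 = 3 := by omega
    rw [key]
    interval_cases k <;> simp only [csF_0, csF_1, csF_2, csF_3, csF_4, csF_5, csF_6, csF_7, csF_8, csF_9, csF_10, csF_11, csF_12, csF_13, csF_14, csF_15, csF_16, csF_17, csF_18, csF_19, csF_20, csF_21, csF_22, csF_23, csF_24, csF_25, csF_26, csF_27, csF_28, csF_29, csF_30] <;> decide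
  · have h := good_third _ (csF_good k (by omega))
    constructor
    · intro h3
      exact absurd (by omega : (csF k).2.2.1 = 3) h
    · intro h3
      exfalso
      omega
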